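/- arXiv:1008.5030 — 3 statements merged into one kernel-verified Lean document; each statement's English description precedes it below -/
import Mathlib

section
/- Let d ≥ 1, λ ∈ ℝ^d, and let (a_k)_{k∈ℤ^d} be complex numbers with a_{−k} = conj(a_k) for all k and ∑_{k∈ℤ^d} |k| |a_k| < ∞. Define the real-valued Lipschitz function ω(y₁) := ∑_{k∈ℤ^d} a_k e^{2πi (k·λ) y₁}. If the derivative ω' is not identically zero, then there exists A > 0 such that inf_{y₁∈ℝ} ∫₀^A ω'(y₁+t)² dt > 0. -/
/-!
Write `ω' = g = ∑ c_k e(μ_k t)` with `e(x) = exp(2πix)`, `μ_k = k·λ` and `c_k = 2πi μ_k a_k`;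
the coefficients are absolutely summable and `g` is real. Then `g² = |g|² = ∑_{k,l} c_k c̄_l
e((μ_k - μ_l) t)` is again an absolutely convergent exponential sum. Averaging it over a window
of length `A` damps every term with `μ_k ≠ μ_l` by `min 1 (π|μ_k - μ_l|A)⁻¹`, uniformly in the
position of the window, so by dominated convergence the average tends uniformly to the diagonal
part `∑_v |∑_{μ_k = v} c_k|²`. Grouping the terms of `g(t₀) ≠ 0` by frequency shows that some
`∑_{μ_k = v} c_k` is nonzero, so this limit is positive.
-/

open MeasureTheory Real Set Filter
open Complex ComplexConjugate Topology

noncomputable section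

lemma norm_exp_two_pi_I_mul (ν t : ℝ) : ‖cexp (2 * π * I * ν * t)‖ = 1 := by
  rw [show 2 * π * I * ν * t = ((2 * π * ν * t : ℝ) : ℂ) * I by push_cast; ring]
  exact norm_exp_ofReal_mul_I _

/-- Bound for `|A⁻¹ ∫_y^{y+A} e(νs) ds - [ν = 0]|`. -/
def averageExpBound (A ν : ℝ) : ℝ := if ν = 0 then 0 else min 1 (π * |ν| * A)⁻¹

lemma averageExpBound_nonneg {A : ℝ} (hA : 0 ≤ A) (ν : ℝ) : 0 ≤ averageExpBound A ν := by
  unfold averageExpBound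
  split_ifs
  exacts [le_rfl, le_min zero_le_one (by positivity)]

lemma averageExpBound_le_one (A ν : ℝ) : averageExpBound A ν ≤ 1 := by
  unfold averageExpBound
  split_ifs
  exacts [zero_le_one, min_le_left _ _]

lemma tendsto_averageExpBound (ν : ℝ) :
    Tendsto (fun A => averageExpBound A ν) atTop (𝓝 0) := by
  unfold averageExpBound
  split_ifs with hν
  · exact tendsto_const_nhds
  have h := tendsto_inv_atTop_zero.comp
    (tendsto_id.const_mul_atTop (by positivity : 0 < π * |ν|))
  simpa using (tendsto_const_nhds (x := (1 : ℝ))).min h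

lemma norm_integral_exp_two_pi_I_mul_le {ν : ℝ} (hν : ν ≠ 0) (a b : ℝ) :
    ‖∫ s in a..b, cexp (2 * π * I * ν * s)‖ ≤ (π * |ν|)⁻¹ := by
  have hν' : 2 * π * I * ν ≠ 0 := by simp [hν, pi_ne_zero, I_ne_zero]
  have hnorm : ‖2 * π * I * (ν : ℂ)‖ = 2 * (π * |ν|) := by
    simp only [norm_mul, norm_I, norm_real, Real.norm_of_nonneg pi_pos.le, Complex.norm_ofNat,
      Real.norm_eq_abs]
    ring
  have hdiff : ‖cexp (2 * π * I * ν * b) - cexp (2 * π * I * ν * a)‖ ≤ 2 :=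
    (norm_sub_le _ _).trans (by rw [norm_exp_two_pi_I_mul, norm_exp_two_pi_I_mul]; norm_num)
  rw [integral_exp_mul_complex hν', norm_div, hnorm, div_le_iff₀ (by positivity)]
  calc _ ≤ 2 := hdiff
    _ = (π * |ν|)⁻¹ * (2 * (π * |ν|)) := by field_simp [pi_ne_zero, abs_ne_zero.2 hν]

lemma norm_integral_exp_sub_le {A : ℝ} (hA : 0 < A) (ν y : ℝ) :
    ‖(∫ s in y..y + A, cexp (2 * π * I * ν * s)) - (if ν = 0 then (A : ℂ) else 0)‖ ≤
      A * averageExpBound A ν := by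
  unfold averageExpBound
  split_ifs with hν
  · simp [hν]
  have hA' : ‖∫ s in y..y + A, cexp (2 * π * I * ν * s)‖ ≤ A := by
    simpa [norm_exp_two_pi_I_mul, abs_of_pos hA] using
      intervalIntegral.norm_integral_le_of_norm_le_const
        (a := y) (b := y + A) (C := 1) fun s _ => (norm_exp_two_pi_I_mul ν s).le
  rw [sub_zero, mul_min_of_nonneg _ _ hA.le, mul_one, mul_inv, mul_left_comm,
    mul_inv_cancel₀ hA.ne', mul_one]
  exact le_min hA' (norm_integral_exp_two_pi_I_mul_le hν _ _)

def expSum {ι : Type*} (c : ι → ℂ) (μ : ι → ℝ) (t : ℝ) : ℂ :=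
  ∑' k, c k * cexp (2 * π * I * μ k * t)

def fiberSum {ι : Type*} (c : ι → ℂ) (μ : ι → ℝ) (v : ℝ) : ℂ := ∑' k : μ ⁻¹' {v}, c k

section ExpSum

variable {ι : Type*} {c : ι → ℂ} (μ : ι → ℝ)

lemma norm_expSum_term (k : ι) (t : ℝ) : ‖c k * cexp (2 * π * I * μ k * t)‖ = ‖c k‖ := by
  rw [norm_mul, norm_exp_two_pi_I_mul, mul_one]

lemma summable_expSum_term (hc : Summable fun k => ‖c k‖) (t : ℝ) :
    Summable fun k => c k * cexp (2 * π * I * μ k * t) :=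
  .of_norm <| by simpa only [norm_expSum_term] using hc

lemma continuous_expSum (hc : Summable fun k => ‖c k‖) : Continuous (expSum c μ) :=
  continuous_tsum (fun k => by fun_prop) hc fun k t => (norm_expSum_term μ k t).le

lemma hasDerivAt_expSum (hc : Summable fun k => ‖c k‖)
    (hc' : Summable fun k => ‖c k‖ * |μ k|) (t : ℝ) :
    HasDerivAt (expSum c μ) (expSum (fun k => 2 * π * I * μ k * c k) μ t) t := by
  have hterm (k : ι) (s : ℝ) : HasDerivAt (fun s : ℝ => c k * cexp (2 * π * I * μ k * s))
      (2 * π * I * μ k * c k * cexp (2 * π * I * μ k * s)) s := by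
    have h := ((hasDerivAt_id' (x := (s : ℂ))).const_mul (2 * π * I * μ k)).cexp.const_mul (c k)
    convert h.comp_ofReal using 1
    ring
  refine hasDerivAt_tsum (hc'.mul_left (2 * π)) hterm (fun k s => le_of_eq ?_)
    (summable_expSum_term μ hc 0) t
  simp only [norm_mul, norm_exp_two_pi_I_mul, norm_I, norm_real, Real.norm_of_nonneg pi_pos.le,
    Complex.norm_ofNat, Real.norm_eq_abs]
  ring

lemma conj_expSum (t : ℝ) :
    conj (expSum c μ t) = ∑' k, conj (c k) * cexp (2 * π * I * (-μ k : ℝ) * t) := by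
  rw [expSum, conj_tsum]
  congr 1 with k
  rw [map_mul, ← exp_conj]
  simp only [map_mul, conj_I, conj_ofReal, map_ofNat]
  push_cast
  ring_nf

lemma im_expSum_eq_zero [InvolutiveNeg ι] (hconj : ∀ k, c (-k) = conj (c k))
    (hμ : ∀ k, μ (-k) = -μ k) (t : ℝ) : (expSum c μ t).im = 0 := by
  refine conj_eq_iff_im.mp ?_
  rw [conj_expSum, expSum, ← (Equiv.neg ι).tsum_eq]
  simp only [Equiv.neg_apply, hconj, hμ, conj_conj, neg_neg]

lemma expSum_mul_conj (hc : Summable fun k => ‖c k‖) (t : ℝ) :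
    expSum c μ t * conj (expSum c μ t) =
      expSum (fun p : ι × ι => c p.1 * conj (c p.2)) (fun p => μ p.1 - μ p.2) t := by
  have hc' : Summable fun k => ‖conj (c k) * cexp (2 * π * I * (-μ k : ℝ) * t)‖ := by
    simpa only [norm_mul, norm_exp_two_pi_I_mul, mul_one, RCLike.norm_conj] using hc
  rw [conj_expSum, expSum, tsum_mul_tsum_of_summable_norm
    (by simpa only [norm_expSum_term] using hc) hc', expSum]
  congr 1 with p
  rw [mul_mul_mul_comm, ← Complex.exp_add]
  push_cast
  ring_nf

lemma hasSum_fiberSum_mul_exp (hc : Summable fun k => ‖c k‖) (t : ℝ) :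
    HasSum (fun v => fiberSum c μ v * cexp (2 * π * I * v * t)) (expSum c μ t) := by
  refine ((summable_expSum_term μ hc t).hasSum.tsum_fiberwise μ).congr_fun fun v => ?_
  rw [fiberSum, ← tsum_mul_right]
  congr 1 with k
  rw [show μ k = v from k.2]

lemma exists_fiberSum_ne_zero (hc : Summable fun k => ‖c k‖) {t : ℝ} (ht : expSum c μ t ≠ 0) :
    ∃ v, fiberSum c μ v ≠ 0 := by
  by_contra! h
  exact ht ((hasSum_fiberSum_mul_exp μ hc t).unique (by simp [h]))

lemma hasSum_normSq_fiberSum (hc : Summable fun k => ‖c k‖) :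
    HasSum (fun v => (normSq (fiberSum c μ v) : ℂ))
      (fiberSum (fun p : ι × ι => c p.1 * conj (c p.2)) (fun p => μ p.1 - μ p.2) 0) := by
  have hc' : Summable fun k => ‖conj (c k)‖ := by simpa only [RCLike.norm_conj] using hc
  set Z := ((fun p : ι × ι => μ p.1 - μ p.2) ⁻¹' {0}).indicator fun p => c p.1 * conj (c p.2)
  have hZ : HasSum Z (fiberSum (fun p : ι × ι => c p.1 * conj (c p.2))
      (fun p => μ p.1 - μ p.2) 0) := by
    rw [fiberSum, tsum_subtype _ fun p : ι × ι => c p.1 * conj (c p.2)]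
    exact ((hc.mul_norm hc').of_norm.indicator _).hasSum
  have hrow (k : ι) : HasSum (fun l => Z (k, l)) (c k * conj (fiberSum c μ (μ k))) := by
    have hconj : HasSum ((μ ⁻¹' {μ k}).indicator fun l => conj (c l))
        (conj (fiberSum c μ (μ k))) := by
      rw [fiberSum, conj_tsum, tsum_subtype _ fun l => conj (c l)]
      exact (hc'.of_norm.indicator _).hasSum
    refine (hconj.mul_left (c k)).congr_fun fun l => ?_
    classical
    simp only [Z, Set.indicator_apply, Set.mem_preimage, Set.mem_singleton_iff, sub_eq_zero,
      @eq_comm _ (μ k), mul_ite, mul_zero]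
  refine ((hZ.prod_fiberwise hrow).tsum_fiberwise μ).congr_fun fun v => ?_
  rw [← mul_conj, fiberSum, ← tsum_mul_right]
  congr 1 with k
  rw [show μ k = v from k.2, fiberSum]

lemma re_fiberSum_mul_conj_pos (hc : Summable fun k => ‖c k‖) {t : ℝ} (ht : expSum c μ t ≠ 0) :
    0 < (fiberSum (fun p : ι × ι => c p.1 * conj (c p.2)) (fun p => μ p.1 - μ p.2) 0).re := by
  obtain ⟨v, hv⟩ := exists_fiberSum_ne_zero μ hc ht
  have h := reCLM.hasSum (hasSum_normSq_fiberSum μ hc)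
  simp only [reCLM_apply, ofReal_re] at h
  exact (normSq_pos.2 hv).trans_le (le_hasSum h v fun _ _ => normSq_nonneg _)

lemma summable_mul_averageExpBound (hc : Summable fun k => ‖c k‖) {A : ℝ} (hA : 0 ≤ A) :
    Summable fun k => ‖c k‖ * averageExpBound A (μ k) :=
  hc.of_nonneg_of_le (fun _ => mul_nonneg (norm_nonneg _) (averageExpBound_nonneg hA _))
    fun _ => mul_le_of_le_one_right (norm_nonneg _) (averageExpBound_le_one _ _)

lemma tendsto_tsum_mul_averageExpBound (hc : Summable fun k => ‖c k‖) :
    Tendsto (fun A => ∑' k, ‖c k‖ * averageExpBound A (μ k)) atTop (𝓝 0) := by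
  have h := tendsto_tsum_of_dominated_convergence hc
    (fun k => (tendsto_averageExpBound (μ k)).const_mul ‖c k‖)
    ((eventually_ge_atTop 0).mono fun A hA k => ?_)
  · simpa using h
  rw [norm_mul, norm_norm, Real.norm_of_nonneg (averageExpBound_nonneg hA _)]
  exact mul_le_of_le_one_right (norm_nonneg _) (averageExpBound_le_one _ _)

lemma norm_integral_expSum_sub_le [Countable ι] (hc : Summable fun k => ‖c k‖) {A : ℝ}
    (hA : 0 < A) (y : ℝ) :
    ‖(∫ s in y..y + A, expSum c μ s) - A * fiberSum c μ 0‖ ≤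
      A * ∑' k, ‖c k‖ * averageExpBound A (μ k) := by
  classical
  have hint : HasSum (fun k => c k * ∫ s in y..y + A, cexp (2 * π * I * μ k * s))
      (∫ s in y..y + A, expSum c μ s) := by
    simp_rw [← intervalIntegral.integral_const_mul]
    exact intervalIntegral.hasSum_integral_of_dominated_convergence (fun k _ => ‖c k‖)
      (fun k => (by fun_prop : Continuous _).aestronglyMeasurable)
      (fun k => ae_of_all _ fun s _ => (norm_expSum_term μ k s).le)
      (ae_of_all _ fun _ _ => hc) intervalIntegrable_const
      (ae_of_all _ fun s _ => (summable_expSum_term μ hc s).hasSum)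
  have hmean :
      HasSum (fun k => c k * (if μ k = 0 then (A : ℂ) else 0)) (A * fiberSum c μ 0) := by
    rw [fiberSum, tsum_subtype]
    refine ((hc.of_norm.indicator _).hasSum.mul_left (A : ℂ)).congr_fun fun k => ?_
    simp only [Set.indicator_apply, Set.mem_preimage, Set.mem_singleton_iff, mul_ite, mul_zero,
      mul_comm]
  refine (hint.sub hmean).norm_le_of_bounded
    ((summable_mul_averageExpBound μ hc hA.le).hasSum.mul_left A) fun k => ?_
  rw [← mul_sub, norm_mul, mul_left_comm]
  exact mul_le_mul_of_nonneg_left (norm_integral_exp_sub_le hA _ _) (norm_nonneg _)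

theorem exists_forall_le_integral_sq_norm_expSum [Countable ι] (hc : Summable fun k => ‖c k‖)
    {t₀ : ℝ} (ht₀ : expSum c μ t₀ ≠ 0) :
    ∃ A > 0, ∃ m > 0, ∀ y, m ≤ ∫ t in (0 : ℝ)..A, ‖expSum c μ (y + t)‖ ^ 2 := by
  have hM := re_fiberSum_mul_conj_pos μ hc ht₀
  have hcc : Summable fun p : ι × ι => ‖c p.1 * conj (c p.2)‖ :=
    hc.mul_norm (g := fun k => conj (c k)) (by simpa only [RCLike.norm_conj] using hc)
  have herr := tendsto_tsum_mul_averageExpBound (fun p : ι × ι => μ p.1 - μ p.2) hcc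
  obtain ⟨A, hAerr, hA⟩ := ((herr.eventually_lt_const hM).and (eventually_gt_atTop 0)).exists
  refine ⟨A, hA, A * (_ - _), mul_pos hA (sub_pos.2 hAerr), fun y => ?_⟩
  have hsq : ∫ t in (0 : ℝ)..A, ‖expSum c μ (y + t)‖ ^ 2 =
      (∫ s in y..y + A, expSum (fun p : ι × ι => c p.1 * conj (c p.2))
        (fun p => μ p.1 - μ p.2) s).re := by
    rw [intervalIntegral.integral_comp_add_left (fun s => ‖expSum c μ s‖ ^ 2), add_zero,
      ← RCLike.re_to_complex,
      ← intervalIntegral.intervalIntegral_re ((continuous_expSum _ hcc).intervalIntegrable _ _)]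
    congr 1 with s
    rw [← expSum_mul_conj μ hc, mul_conj, RCLike.re_to_complex, ofReal_re, Complex.sq_norm]
  have hdev := (abs_re_le_norm _).trans
    (norm_integral_expSum_sub_le (fun p : ι × ι => μ p.1 - μ p.2) hcc hA y)
  rw [sub_re, re_ofReal_mul] at hdev
  rw [hsq]
  nlinarith [(abs_le.1 hdev).1]

end ExpSum

section Lattice

variable {n : Type*} [Fintype n]

lemma one_le_sum_abs_of_ne_zero {k : n → ℤ} (hk : k ≠ 0) : (1 : ℝ) ≤ ∑ i, (|k i| : ℝ) := by
  obtain ⟨i, hi⟩ := Function.ne_iff.1 hk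
  calc (1 : ℝ) ≤ |(k i : ℝ)| := by exact_mod_cast Int.one_le_abs hi
    _ ≤ ∑ j, (|k j| : ℝ) :=
      Finset.single_le_sum (fun j _ => abs_nonneg (k j : ℝ)) (Finset.mem_univ i)

lemma abs_sum_intCast_mul_le (k : n → ℤ) (lam : n → ℝ) :
    |∑ i, (k i : ℝ) * lam i| ≤ (∑ i, (|k i| : ℝ)) * ∑ i, |lam i| := by
  calc |∑ i, (k i : ℝ) * lam i| ≤ ∑ i, (|k i| : ℝ) * |lam i| :=
        (Finset.abs_sum_le_sum_abs _ _).trans_eq (Finset.sum_congr rfl fun i _ => abs_mul _ _)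
    _ ≤ ∑ i, (|k i| : ℝ) * ∑ j, |lam j| := Finset.sum_le_sum fun i _ =>
        mul_le_mul_of_nonneg_left
          (Finset.single_le_sum (fun j _ => abs_nonneg (lam j)) (Finset.mem_univ i)) (abs_nonneg _)
    _ = _ := (Finset.sum_mul ..).symm

lemma summable_norm_of_summable_sum_abs_mul_norm {a : (n → ℤ) → ℂ}
    (h : Summable fun k => (∑ i, (|k i| : ℝ)) * ‖a k‖) : Summable fun k => ‖a k‖ :=
  h.of_norm_bounded_eventually <| (eventually_cofinite_ne 0).mono fun k hk => by
    rw [norm_norm]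
    exact le_mul_of_one_le_left (norm_nonneg _) (one_le_sum_abs_of_ne_zero hk)

end Lattice

theorem stmt5_general (d : ℕ) (lam : Fin d → ℝ) (a : (Fin d → ℤ) → ℂ)
    (hreal : ∀ k : Fin d → ℤ, a (-k) = (starRingEnd ℂ) (a k))
    (hsum : Summable fun k : Fin d → ℤ => (∑ i, (|k i| : ℝ)) * ‖a k‖)
    (ω : ℝ → ℝ)
    (hω : ∀ y₁ : ℝ, ω y₁ =
      (∑' k : Fin d → ℤ,
        a k * Complex.exp (2 * Real.pi * Complex.I *
          ((∑ i, (k i : ℝ) * lam i : ℝ) : ℂ) * (y₁ : ℂ))).re)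
    (hne : ¬ ∀ t, deriv ω t = 0) :
    ∃ A > 0, 0 < ⨅ y₁ : ℝ, ∫ t in (0 : ℝ)..A, (deriv ω (y₁ + t)) ^ 2 := by
  set μ : (Fin d → ℤ) → ℝ := fun k => ∑ i, (k i : ℝ) * lam i
  have ha := summable_norm_of_summable_sum_abs_mul_norm hsum
  have ha' : Summable fun k => ‖a k‖ * |μ k| :=
    (hsum.mul_left (∑ i, |lam i|)).of_nonneg_of_le (fun _ => by positivity) fun k => by
      nlinarith [abs_sum_intCast_mul_le k lam, norm_nonneg (a k)]
  set c := fun k => 2 * π * I * μ k * a k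
  have hc : Summable fun k => ‖c k‖ := (ha'.mul_left (2 * π)).congr fun k => by
    simp only [c, norm_mul, norm_I, norm_real, Real.norm_of_nonneg pi_pos.le, Complex.norm_ofNat,
      Real.norm_eq_abs]
    ring
  have hderiv (t : ℝ) : deriv ω t = (expSum c μ t).re := by
    have h := reCLM.hasFDerivAt.comp_hasDerivAt t (hasDerivAt_expSum μ ha ha' t)
    exact (h.congr_of_eventuallyEq (Eventually.of_forall hω)).deriv
  have hμ (k : Fin d → ℤ) : μ (-k) = -μ k := by simp [μ]
  have hc_neg (k : Fin d → ℤ) : c (-k) = conj (c k) := by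
    simp only [c, hμ, hreal, map_mul, conj_ofReal, conj_I, map_ofNat, ofReal_neg]
    ring
  have hsq (s : ℝ) : deriv ω s ^ 2 = ‖expSum c μ s‖ ^ 2 := by
    rw [hderiv, ← sq_abs, abs_re_eq_norm.2 (im_expSum_eq_zero μ hc_neg hμ s)]
  obtain ⟨t₀, ht₀⟩ := not_forall.1 hne
  obtain ⟨A, hA, m, hm, hle⟩ := exists_forall_le_integral_sq_norm_expSum μ hc
    (t₀ := t₀) fun h => ht₀ (by rw [hderiv, h, zero_re])
  refine ⟨A, hA, hm.trans_le (le_ciInf fun y => ?_)⟩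
  simpa only [hsq] using hle y

/-- Quasi-periodic case: if `ω(y₁) = ∑_{k∈ℤ^d} a_k e^{2πi(k·λ)y₁}` is real valued
(`a_{−k} = conj a_k`) with `∑ |k| |a_k| < ∞`, and `ω'` is not identically zero, then
the uniform non-degeneracy condition `∃ A > 0, inf_{y₁} ∫₀^A ω'(y₁+t)² dt > 0` holds. -/
theorem stmt5 (d : ℕ) (hd : 1 ≤ d) (lam : Fin d → ℝ) (a : (Fin d → ℤ) → ℂ)
    (hreal : ∀ k : Fin d → ℤ, a (-k) = (starRingEnd ℂ) (a k))
    (hsum : Summable fun k : Fin d → ℤ => (∑ i, (|k i| : ℝ)) * ‖a k‖)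
    (ω : ℝ → ℝ)
    (hω : ∀ y₁ : ℝ, ω y₁ =
      (∑' k : Fin d → ℤ,
        a k * Complex.exp (2 * Real.pi * Complex.I *
          ((∑ i, (k i : ℝ) * lam i : ℝ) : ℂ) * (y₁ : ℂ))).re)
    (hne : ¬ ∀ t, deriv ω t = 0) :
    ∃ A > 0, 0 < ⨅ y₁ : ℝ, ∫ t in (0 : ℝ)..A, (deriv ω (y₁ + t)) ^ 2 :=
  stmt5_general d lam a hreal hsum ω hω hne
end
end

section
/- Let (M,μ) be a probability space and (τ_t)_{t∈ℝ} a jointly measurable, measure-preserving, ergodic group of transformations of M. Let h : M → [0,∞) be bounded and measurable, and fix A > 0. Then for μ-almost every m ∈ M, inf_{y₁∈ℝ} ∫₀^A h(τ_{y₁+t} m) dt = essinf_{m'∈M} ∫₀^A h(τ_t m') dt. -/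
open MeasureTheory Real Set Filter symmDiff

noncomputable section

/-- The essential infimum of a real-valued function with respect to a measure,
realized as the supremum of its a.e. lower bounds. -/
def essInfR {M : Type*} [MeasurableSpace M] (μ : Measure M) (F : M → ℝ) : ℝ :=
  sSup {c : ℝ | ∀ᵐ m ∂μ, c ≤ F m}

/-- For a jointly measurable, measure-preserving, ergodic flow `(τ_t)` on a probability
space and a bounded measurable `h ≥ 0`, for a.e. `m`,
`inf_{y₁∈ℝ} ∫₀^A h(τ_{y₁+t} m) dt = essinf_{m'} ∫₀^A h(τ_t m') dt`. -/
theorem stmt6 {M : Type*} [MeasurableSpace M] (μ : Measure M) [IsProbabilityMeasure μ]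
    (τ : ℝ → M → M)
    (hjm : Measurable fun p : ℝ × M => τ p.1 p.2)
    (hid : ∀ m, τ 0 m = m)
    (hgrp : ∀ s t : ℝ, ∀ m, τ (s + t) m = τ s (τ t m))
    (hpres : ∀ t : ℝ, MeasurePreserving (τ t) μ μ)
    (herg : ∀ A : Set M, MeasurableSet A → (∀ t : ℝ, μ ((τ t ⁻¹' A) ∆ A) = 0) →
      μ A = 0 ∨ μ A = 1)
    (h : M → ℝ) (hmeas : Measurable h) (hnn : ∀ m, 0 ≤ h m) (hbd : ∃ C : ℝ, ∀ m, h m ≤ C)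
    (A : ℝ) (hA : 0 < A) :
    ∀ᵐ m ∂μ,
      (⨅ y₁ : ℝ, ∫ t in (0 : ℝ)..A, h (τ (y₁ + t) m)) =
        essInfR μ fun m' => ∫ t in (0 : ℝ)..A, h (τ t m') := by
  obtain ⟨C, hC⟩ := hbd
  set F : M → ℝ := fun m' => ∫ t in (0 : ℝ)..A, h (τ t m') with hFdef
  -- measurability of t ↦ h (τ t m)
  have hτmeas : ∀ t : ℝ, Measurable (τ t) := fun t => (hpres t).measurable
  have hφmeas : ∀ m : M, Measurable fun t : ℝ => h (τ t m) := fun m =>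
    hmeas.comp (hjm.comp (measurable_id.prodMk measurable_const))
  have hφint : ∀ (m : M) (a b : ℝ),
      IntervalIntegrable (fun t : ℝ => h (τ t m)) volume a b := by
    intro m a b
    rw [intervalIntegrable_iff]
    refine Measure.integrableOn_of_bounded (M := C) measure_Ioc_lt_top.ne
      (hφmeas m).aestronglyMeasurable ?_
    filter_upwards with t
    rw [Real.norm_of_nonneg (hnn _)]
    exact hC _
  -- F is nonnegative and bounded
  have hFnn : ∀ m, 0 ≤ F m := fun m =>
    intervalIntegral.integral_nonneg hA.le fun t _ => hnn _
  have hFub : ∀ m, F m ≤ (A - 0) * C := by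
    intro m
    have := intervalIntegral.integral_mono_on hA.le (hφint m 0 A)
      intervalIntegrable_const (fun t _ => hC (τ t m))
    simpa [intervalIntegral.integral_const, smul_eq_mul] using this
  -- F is measurable
  have hFmeas : Measurable F := by
    have hsm : StronglyMeasurable fun p : M × ℝ => h (τ p.2 p.1) :=
      (hmeas.comp (hjm.comp (measurable_snd.prodMk measurable_fst))).stronglyMeasurable
    have := hsm.integral_prod_right' (ν := volume.restrict (Ioc (0:ℝ) A))
    have heq : F = fun m => ∫ t, h (τ t m) ∂(volume.restrict (Ioc (0:ℝ) A)) := by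
      funext m
      rw [hFdef]
      exact intervalIntegral.integral_of_le hA.le
    rw [heq]
    exact this.measurable
  -- shift formula
  have hshift : ∀ (y : ℝ) (m : M), F (τ y m) = ∫ s in y..(A + y), h (τ s m) := by
    intro y m
    have h1 : F (τ y m) = ∫ t in (0:ℝ)..A, h (τ (t + y) m) := by
      refine intervalIntegral.integral_congr fun t _ => ?_
      rw [← hgrp]
    rw [h1]
    have := intervalIntegral.integral_comp_add_right (a := (0:ℝ)) (b := A)
      (fun s => h (τ s m)) y
    simpa using this
  -- continuity of y ↦ F (τ y m)
  have hcont : ∀ m : M, Continuous fun y : ℝ => F (τ y m) := by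
    intro m
    have heq : (fun y : ℝ => F (τ y m)) =
        fun y => (∫ s in (0:ℝ)..(A + y), h (τ s m)) - ∫ s in (0:ℝ)..y, h (τ s m) := by
      funext y
      rw [hshift y m, ← intervalIntegral.integral_interval_sub_left (hφint m 0 (A + y))
        (hφint m 0 y)]
    rw [heq]
    exact ((intervalIntegral.continuous_primitive (hφint m) 0).comp
      (continuous_const.add continuous_id)).sub
      (intervalIntegral.continuous_primitive (hφint m) 0)
  -- the invariant function I
  set I : M → ℝ := fun m => ⨅ y : ℝ, F (τ y m) with hIdef
  have hbddR : ∀ m : M, BddBelow (range fun y : ℝ => F (τ y m)) := by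
    intro m
    exact ⟨0, by rintro x ⟨y, rfl⟩; exact hFnn _⟩
  have hbddQ : ∀ m : M, BddBelow (range fun q : ℚ => F (τ (q : ℝ) m)) := by
    intro m
    exact ⟨0, by rintro x ⟨q, rfl⟩; exact hFnn _⟩
  have hIleF : ∀ m, I m ≤ F m := by
    intro m
    have := ciInf_le (hbddR m) (0 : ℝ)
    rwa [hid m] at this
  have hInn : ∀ m, 0 ≤ I m := fun m => le_ciInf fun y => hFnn _
  -- I equals the infimum over rationals
  have hIQ : ∀ m, I m = ⨅ q : ℚ, F (τ (q : ℝ) m) := by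
    intro m
    refine le_antisymm (le_ciInf fun q => ciInf_le (hbddR m) (q : ℝ)) ?_
    refine le_ciInf fun y => ?_
    set c : ℝ := ⨅ q : ℚ, F (τ (q : ℝ) m) with hc
    have hcl : IsClosed {y : ℝ | c ≤ F (τ y m)} :=
      isClosed_le continuous_const (hcont m)
    have hsub : range ((↑) : ℚ → ℝ) ⊆ {y : ℝ | c ≤ F (τ y m)} := by
      rintro _ ⟨q, rfl⟩
      exact ciInf_le (hbddQ m) q
    have := closure_minimal hsub hcl
    rw [Rat.denseRange_cast.closure_eq] at this
    exact this (mem_univ y)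
  have hImeas : Measurable I := by
    have : I = fun m => ⨅ q : ℚ, F (τ (q : ℝ) m) := funext hIQ
    rw [this]
    exact Measurable.iInf fun q => hFmeas.comp (hτmeas _)
  -- exact invariance of I
  have hIinv : ∀ (s : ℝ) (m : M), I (τ s m) = I m := by
    intro s m
    have h1 : (fun y : ℝ => F (τ y (τ s m))) = fun y : ℝ => F (τ (y + s) m) := by
      funext y; rw [hgrp]
    have h2 : (range fun y : ℝ => F (τ (y + s) m)) = range fun y : ℝ => F (τ y m) := by
      ext x
      constructor
      · rintro ⟨y, rfl⟩; exact ⟨y + s, rfl⟩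
      · rintro ⟨y, rfl⟩
        refine ⟨y - s, ?_⟩
        show F (τ (y - s + s) m) = F (τ y m)
        have hys : y - s + s = y := by ring
        rw [hys]
    show ⨅ y : ℝ, F (τ y (τ s m)) = ⨅ y : ℝ, F (τ y m)
    rw [h1, iInf, iInf, h2]
  -- ergodicity: level sets of I have measure 0 or 1
  have hlevel : ∀ r : ℝ, μ {m | I m ≤ r} = 0 ∨ μ {m | I m ≤ r} = 1 := by
    intro r
    have hms : MeasurableSet {m | I m ≤ r} := hImeas measurableSet_Iic
    refine herg _ hms fun t => ?_
    have : τ t ⁻¹' {m | I m ≤ r} = {m | I m ≤ r} := by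
      ext m
      simp only [mem_preimage, mem_setOf_eq, hIinv]
    rw [this, symmDiff_self]
    simp
  have hmono : ∀ r r' : ℝ, r ≤ r' → μ {m | I m ≤ r} = 1 → μ {m | I m ≤ r'} = 1 := by
    intro r r' hrr' h1
    refine le_antisymm prob_le_one ?_
    rw [← h1]
    exact measure_mono fun m hm => le_trans hm hrr'
  -- the constant κ
  set S : Set ℝ := {r : ℝ | μ {m | I m ≤ r} = 1} with hSdef
  have hSne : ((A - 0) * C) ∈ S := by
    have : {m | I m ≤ (A - 0) * C} = univ := by
      ext m; simp only [mem_setOf_eq, mem_univ, iff_true]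
      exact (hIleF m).trans (hFub m)
    simp only [hSdef, mem_setOf_eq, this, measure_univ]
  have hSbdd : BddBelow S := by
    refine ⟨0, fun r hr => ?_⟩
    by_contra hneg
    push_neg at hneg
    have : {m | I m ≤ r} = ∅ := by
      ext m; simp only [mem_setOf_eq, mem_empty_iff_false, iff_false, not_le]
      exact lt_of_lt_of_le hneg (hInn m)
    rw [hSdef] at hr
    simp only [mem_setOf_eq, this, measure_empty] at hr
    exact zero_ne_one hr
  set κ : ℝ := sInf S with hκdef
  -- a.e. I ≤ κ
  have haeI_le : ∀ᵐ m ∂μ, I m ≤ κ := by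
    have hstep : ∀ n : ℕ, ∀ᵐ m ∂μ, I m ≤ κ + 1 / (n + 1) := by
      intro n
      have hlt : κ < κ + 1 / (n + 1) := by
        have : (0:ℝ) < 1 / (n + 1) := by positivity
        linarith
      obtain ⟨r, hrS, hrlt⟩ := exists_lt_of_csInf_lt ⟨_, hSne⟩ hlt
      have h1 : μ {m | I m ≤ κ + 1 / (n + 1)} = 1 := hmono r _ hrlt.le hrS
      have hms : MeasurableSet {m | I m ≤ κ + 1 / (n + 1)} := hImeas measurableSet_Iic
      have hc : μ {m | I m ≤ κ + 1 / (n + 1)}ᶜ = 0 :=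
        (prob_compl_eq_zero_iff hms).mpr h1
      rw [ae_iff]
      have hseq : {a | ¬ I a ≤ κ + 1 / (n + 1)} = {m | I m ≤ κ + 1 / (n + 1)}ᶜ := rfl
      rw [hseq]
      exact hc
    have := ae_all_iff.mpr hstep
    filter_upwards [this] with m hm
    refine le_of_forall_pos_le_add fun ε hε => ?_
    obtain ⟨n, hn⟩ := exists_nat_one_div_lt hε
    exact (hm n).trans (by linarith [hn])
  -- a.e. κ ≤ I
  have haeκ_le : ∀ᵐ m ∂μ, κ ≤ I m := by
    have hstep : ∀ n : ℕ, ∀ᵐ m ∂μ, κ - 1 / (n + 1) < I m := by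
      intro n
      have hnotS : (κ - 1 / (n + 1)) ∉ S := by
        intro hmem
        have := csInf_le hSbdd hmem
        have hpos : (0:ℝ) < 1 / (n + 1) := by positivity
        rw [← hκdef] at this
        linarith
      have h0 : μ {m | I m ≤ κ - 1 / (n + 1)} = 0 := by
        rcases hlevel (κ - 1 / (n + 1)) with h0 | h1
        · exact h0
        · exact absurd h1 hnotS
      rw [ae_iff]
      simp only [not_lt]
      exact h0
    have := ae_all_iff.mpr hstep
    filter_upwards [this] with m hm
    refine le_of_forall_pos_le_add fun ε hε => ?_
    obtain ⟨n, hn⟩ := exists_nat_one_div_lt hε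
    have := hm n
    linarith
  -- the essential infimum
  set S' : Set ℝ := {c : ℝ | ∀ᵐ m ∂μ, c ≤ F m} with hS'def
  have hS'ne : (0:ℝ) ∈ S' := ae_of_all _ hFnn
  haveI : (ae μ).NeBot := ae_neBot.2 (IsProbabilityMeasure.ne_zero μ)
  have hS'bdd : BddAbove S' := by
    refine ⟨(A - 0) * C, fun c hc => ?_⟩
    obtain ⟨m, hm⟩ := (show ∀ᵐ m ∂μ, c ≤ F m from hc).exists
    exact hm.trans (hFub m)
  -- κ ≤ essInfR
  have hκle : κ ≤ essInfR μ F := by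
    refine le_csSup hS'bdd ?_
    filter_upwards [haeκ_le] with m hm
    exact hm.trans (hIleF m)
  -- a.e. essInfR ≤ I
  have haec_le : ∀ᵐ m ∂μ, essInfR μ F ≤ I m := by
    have hstep : ∀ n : ℕ, ∀ᵐ m ∂μ, essInfR μ F - 1 / (n + 1) ≤ I m := by
      intro n
      have hlt : essInfR μ F - 1 / (n + 1) < sSup S' := by
        have hpos : (0:ℝ) < 1 / (n + 1) := by positivity
        have : essInfR μ F = sSup S' := rfl
        linarith [this]
      obtain ⟨c, hcS, hclt⟩ := exists_lt_of_lt_csSup ⟨_, hS'ne⟩ hlt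
      -- for each rational q, a.e. c ≤ F (τ q m)
      have hq : ∀ q : ℚ, ∀ᵐ m ∂μ, c ≤ F (τ (q:ℝ) m) := by
        intro q
        have h0 : μ {m | ¬ c ≤ F m} = 0 := hcS
        have hset : {m | ¬ c ≤ F (τ (q:ℝ) m)} = τ (q:ℝ) ⁻¹' {m | ¬ c ≤ F m} := rfl
        have hmsFc : MeasurableSet {m | ¬ c ≤ F m} := by
          have heq2 : {m | ¬ c ≤ F m} = F ⁻¹' (Iio c) := by ext m; simp [not_le]
          rw [heq2]; exact hFmeas measurableSet_Iio
        rw [ae_iff, hset, (hpres (q:ℝ)).measure_preimage hmsFc.nullMeasurableSet]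
        exact h0
      have hall := ae_all_iff.mpr hq
      filter_upwards [hall] with m hm
      have : c ≤ I m := by
        rw [hIQ m]
        exact le_ciInf hm
      linarith
    have := ae_all_iff.mpr hstep
    filter_upwards [this] with m hm
    refine le_of_forall_pos_le_add fun ε hε => ?_
    obtain ⟨n, hn⟩ := exists_nat_one_div_lt hε
    have := hm n
    linarith
  -- conclude κ = essInfR
  have hcκ : essInfR μ F ≤ κ := by
    obtain ⟨m, hm1, hm2⟩ := (haec_le.and haeI_le).exists
    linarith
  have hκeq : κ = essInfR μ F := le_antisymm hκle hcκ
  -- finish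
  filter_upwards [haeI_le, haeκ_le] with m h1 h2
  have hgoal : (⨅ y₁ : ℝ, ∫ t in (0:ℝ)..A, h (τ (y₁ + t) m)) = I m := by
    refine iInf_congr fun y => ?_
    refine intervalIntegral.integral_congr fun t _ => ?_
    rw [add_comm y t, hgrp]
  rw [hgoal]
  rw [← hκeq]
  exact le_antisymm h1 h2
end
end

section
/- Let (M,μ) be a probability space and (τ_t)_{t∈ℝ} a jointly measurable, measure-preserving, ergodic group of transformations of M. Let f : [0,∞) × M → ℝ be bounded and measurable, and suppose that for μ-almost every m, f(y₂, m) → 0 as y₂ → ∞. Then for μ-almost every m ∈ M, lim_{ε→0⁺} sup_{R≥1} (ε²/R) ∫_{−R/ε}^{R/ε} ∫_0^{1/ε} f(y₂, τ_{y₁} m)² dy₂ dy₁ = 0. -/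
/-!
Since `f(·, m) → 0`, the averages `(1/n) ∫₀ⁿ f(y, m)² dy` tend to `0` a.e., and by Egorov
uniformly off a set `E` of small measure. The inner integral over `[0, 1/ε]` is then `O(δ/ε)`
unless `τ_{y₁} m ∈ E`, where it is `O(C²/ε)`; so the scaled double integral is `O(δ)` as soon as the orbit of `m` visits `E` with density `O(δ)` in every
window `[-n, n]`. By the maximal ergodic inequality for flows (a Vitali covering argument in
the time variable, transferred to `M` by Fubini) this fails with probability `O(μ E / δ)`, and
Borel–Cantelli over `δ = 2⁻ᵏ`, `μ E ≤ 4⁻ᵏ` concludes.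
-/

open MeasureTheory Real Set Filter symmDiff
open Metric
open scoped ENNReal Topology

lemma volume_le_of_forall_lt_volume_inter_closedBall {W T : Set ℝ} (hW : MeasurableSet W)
    {c a b S : ℝ} (hc : 0 < c) (hT : T ⊆ Icc a b)
    (h : ∀ t ∈ T, ∃ r ≤ S, ENNReal.ofReal (2 * r * c) < volume (W ∩ closedBall t r)) :
    volume T ≤ ENNReal.ofReal (4 / c) * volume (W ∩ Icc (a - S) (b + S)) := by
  choose! r hrS hr using h
  have hr0 : ∀ t ∈ T, 0 < r t := fun t ht => by
    by_contra! hle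
    have := (hr t ht).trans_le <|
      (measure_mono inter_subset_right).trans (Real.volume_closedBall t (r t)).le
    simp [ENNReal.ofReal_eq_zero.2 (by linarith : 2 * r t ≤ 0)] at this
  obtain ⟨u, huT, hdisj, hcov⟩ :=
    Vitali.exists_disjoint_subfamily_covering_enlargement_closedBall T id r S hrS 4 (by norm_num)
  have hu : u.Countable := hdisj.countable_of_nonempty_interior fun t ht =>
    ⟨t, by simpa [interior_closedBall _ (hr0 t (huT ht)).ne'] using hr0 t (huT ht)⟩
  calc volume T ≤ volume (⋃ t ∈ u, closedBall t (4 * r t)) := measure_mono fun t ht => by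
        obtain ⟨t', ht', hsub⟩ := hcov t ht
        exact mem_biUnion ht' (hsub (mem_closedBall_self (hr0 t ht).le))
    _ ≤ ∑' t : u, volume (closedBall (t : ℝ) (4 * r t)) := measure_biUnion_le _ hu _
    _ ≤ ∑' t : u, ENNReal.ofReal (4 / c) * volume (W ∩ closedBall (t : ℝ) (r t)) :=
        ENNReal.tsum_le_tsum fun t => by
          rw [Real.volume_closedBall, show 2 * (4 * r t) = 4 / c * (2 * r t * c) by field_simp,
            ENNReal.ofReal_mul (by positivity)]
          gcongr
          exact (hr t (huT t.2)).le
    _ = ENNReal.ofReal (4 / c) * volume (⋃ t ∈ u, W ∩ closedBall t (r t)) := by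
        have hdisjW : u.PairwiseDisjoint fun t => W ∩ closedBall t (r t) :=
          hdisj.mono fun _ => inter_subset_right
        rw [ENNReal.tsum_mul_left,
          measure_biUnion hu hdisjW fun _ _ => hW.inter measurableSet_closedBall]
    _ ≤ ENNReal.ofReal (4 / c) * volume (W ∩ Icc (a - S) (b + S)) := by
        gcongr
        refine iUnion₂_subset fun t ht => inter_subset_inter_right W ?_
        rw [Real.closedBall_eq_Icc]
        have := hT (huT ht)
        exact Icc_subset_Icc (by linarith [this.1, hrS t (huT ht)])
          (by linarith [this.2, hrS t (huT ht)])

lemma ENNReal.le_of_forall_natCast_mul_le {a b c : ℝ≥0∞} (hc : c ≠ ∞)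
    (h : ∀ K : ℕ, K * a ≤ (K + c) * b) : a ≤ b := by
  refine ENNReal.le_of_forall_pos_le_add fun ε hε hb => ?_
  have hε' : (ε : ℝ≥0∞) ≠ 0 := ENNReal.coe_ne_zero.2 hε.ne'
  obtain ⟨K, hK⟩ := ENNReal.exists_nat_gt (ENNReal.div_ne_top (ENNReal.mul_ne_top hc hb.ne) hε')
  have hK0 : (K : ℝ≥0∞) ≠ 0 := (pos_of_gt hK).ne'
  have hcb : c * b ≤ K * ε := (ENNReal.div_le_iff hε' ENNReal.coe_ne_top).1 hK.le
  refine (ENNReal.mul_le_mul_iff_right hK0 (ENNReal.natCast_ne_top K)).1 ?_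
  calc K * a ≤ (K + c) * b := h K
    _ = K * b + c * b := add_mul _ _ _
    _ ≤ K * (b + ε) := by rw [mul_add]; gcongr

lemma volume_orbit_preimage_inter_closedBall {M : Type*} {τ : ℝ → M → M}
    (hgrp : ∀ s t m, τ (s + t) m = τ s (τ t m))
    (E : Set M) (m : M) (t r : ℝ) :
    volume ((τ · m) ⁻¹' E ∩ closedBall t r) =
      volume ((τ · (τ t m)) ⁻¹' E ∩ closedBall 0 r) := by
  rw [← measure_preimage_add_right volume t]
  congr 1
  ext s
  simp [hgrp]

section Flow

variable {M : Type*} [MeasurableSpace M] {μ : Measure M} {τ : ℝ → M → M}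

lemma measurable_volume_orbit_preimage_inter (hjm : Measurable fun p : ℝ × M => τ p.1 p.2)
    {E : Set M} (hE : MeasurableSet E) (B : Set ℝ) :
    Measurable fun m => volume ((τ · m) ⁻¹' E ∩ B) := by
  convert measurable_measure_prodMk_left (ν := volume.restrict B)
    ((hjm.comp measurable_swap) hE) using 2 with m
  exact (Measure.restrict_apply (hjm.of_uncurry_right hE)).symm

lemma lintegral_volume_orbit_preimage_inter [SFinite μ]
    (hjm : Measurable fun p : ℝ × M => τ p.1 p.2) (hpres : ∀ t, MeasurePreserving (τ t) μ μ)
    {A : Set M} (hA : MeasurableSet A) (B : Set ℝ) :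
    ∫⁻ m, volume ((τ · m) ⁻¹' A ∩ B) ∂μ = volume B * μ A := by
  have hs := (hjm.comp measurable_swap) hA
  calc ∫⁻ m, volume ((τ · m) ⁻¹' A ∩ B) ∂μ = μ.prod (volume.restrict B) _ := by
        rw [Measure.prod_apply hs]
        refine lintegral_congr fun m => ?_
        exact (Measure.restrict_apply (hjm.of_uncurry_right hA)).symm
    _ = ∫⁻ t in B, μ (τ t ⁻¹' A) := Measure.prod_apply_symm hs
    _ = volume B * μ A := by
        simp_rw [fun t => (hpres t).measure_preimage hA.nullMeasurableSet, setLIntegral_const,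
          mul_comm]

lemma measure_setOf_exists_le_lt_volume_orbit_le [SFinite μ]
    (hjm : Measurable fun p : ℝ × M => τ p.1 p.2) (hgrp : ∀ s t m, τ (s + t) m = τ s (τ t m))
    (hpres : ∀ t, MeasurePreserving (τ t) μ μ) {E : Set M} (hE : MeasurableSet E) {c : ℝ}
    (hc : 0 < c) (S : ℕ) :
    μ {m | ∃ n : ℕ, n ≤ S ∧ ENNReal.ofReal (2 * n * c) < volume ((τ · m) ⁻¹' E ∩ closedBall 0 n)}
      ≤ ENNReal.ofReal (4 / c) * μ E := by
  set D := {m | ∃ n : ℕ, n ≤ S ∧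
    ENNReal.ofReal (2 * n * c) < volume ((τ · m) ⁻¹' E ∩ closedBall 0 n)}
  have hD : MeasurableSet D := measurableSet_setOfPred.2 <| Measurable.exists fun n =>
    measurable_const.and <| measurableSet_setOfPred.1 <|
      measurableSet_lt measurable_const (measurable_volume_orbit_preimage_inter hjm hE _)
  have hcover : ∀ (K : ℝ) m, volume ((τ · m) ⁻¹' D ∩ Icc 0 K) ≤
      ENNReal.ofReal (4 / c) * volume ((τ · m) ⁻¹' E ∩ Icc (0 - S) (K + S)) := fun K m =>
    volume_le_of_forall_lt_volume_inter_closedBall (hjm.of_uncurry_right hE) hc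
      inter_subset_right fun t ⟨⟨n, hnS, hn⟩, _⟩ =>
        ⟨n, by exact_mod_cast hnS, by rwa [volume_orbit_preimage_inter_closedBall hgrp]⟩
  refine ENNReal.le_of_forall_natCast_mul_le (c := 2 * S)
    (ENNReal.mul_ne_top ENNReal.ofNat_ne_top (ENNReal.natCast_ne_top S)) fun K => ?_
  calc (K : ℝ≥0∞) * μ D = ∫⁻ m, volume ((τ · m) ⁻¹' D ∩ Icc 0 K) ∂μ := by
        rw [lintegral_volume_orbit_preimage_inter hjm hpres hD, Real.volume_Icc]
        simp
    _ ≤ ∫⁻ m, ENNReal.ofReal (4 / c) * volume ((τ · m) ⁻¹' E ∩ Icc (0 - S) (K + S)) ∂μ :=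
        lintegral_mono (hcover K)
    _ = (K + 2 * S) * (ENNReal.ofReal (4 / c) * μ E) := by
        rw [lintegral_const_mul _ (measurable_volume_orbit_preimage_inter hjm hE _),
          lintegral_volume_orbit_preimage_inter hjm hpres hE, Real.volume_Icc,
          show (K + S : ℝ) - (0 - S) = K + 2 * S by ring, ENNReal.ofReal_add (by positivity)
            (by positivity)]
        simp [ENNReal.ofReal_mul]
        ring

theorem measure_setOf_exists_lt_volume_orbit_le [SFinite μ]
    (hjm : Measurable fun p : ℝ × M => τ p.1 p.2) (hgrp : ∀ s t m, τ (s + t) m = τ s (τ t m))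
    (hpres : ∀ t, MeasurePreserving (τ t) μ μ) {E : Set M} (hE : MeasurableSet E) {c : ℝ}
    (hc : 0 < c) :
    μ {m | ∃ n : ℕ, ENNReal.ofReal (2 * n * c) < volume ((τ · m) ⁻¹' E ∩ closedBall 0 n)}
      ≤ ENNReal.ofReal (4 / c) * μ E := by
  set D : ℕ → Set M := fun S => {m | ∃ n : ℕ, n ≤ S ∧
    ENNReal.ofReal (2 * n * c) < volume ((τ · m) ⁻¹' E ∩ closedBall 0 n)}
  have hunion : {m | ∃ n : ℕ, ENNReal.ofReal (2 * n * c) <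
      volume ((τ · m) ⁻¹' E ∩ closedBall 0 n)} = ⋃ S, D S := by
    ext m
    simp only [D, mem_ofPred_eq, mem_iUnion]
    exact ⟨fun ⟨n, hn⟩ => ⟨n, n, le_rfl, hn⟩, fun ⟨_, n, _, hn⟩ => ⟨n, hn⟩⟩
  have hmono : Monotone D := fun S S' hSS' m ⟨n, hnS, hn⟩ => ⟨n, hnS.trans hSS', hn⟩
  rw [hunion, hmono.measure_iUnion]
  exact iSup_le fun S => measure_setOf_exists_le_lt_volume_orbit_le hjm hgrp hpres hE hc S

theorem ae_eventually_forall_volume_orbit_le [SFinite μ]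
    (hjm : Measurable fun p : ℝ × M => τ p.1 p.2) (hgrp : ∀ s t m, τ (s + t) m = τ s (τ t m))
    (hpres : ∀ t, MeasurePreserving (τ t) μ μ) {E : ℕ → Set M} (hE : ∀ k, MeasurableSet (E k))
    {δ : ℕ → ℝ} (hδ : ∀ k, 0 < δ k) (hsum : Summable δ)
    (hEμ : ∀ k, μ (E k) ≤ ENNReal.ofReal (δ k ^ 2)) :
    ∀ᵐ m ∂μ, ∀ᶠ k in atTop, ∀ n : ℕ,
      volume ((τ · m) ⁻¹' E k ∩ closedBall 0 n) ≤ ENNReal.ofReal (2 * n * δ k) := by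
  have hbad : ∀ k, μ {m | ∃ n : ℕ, ENNReal.ofReal (2 * n * δ k) <
      volume ((τ · m) ⁻¹' E k ∩ closedBall 0 n)} ≤ ENNReal.ofReal (4 * δ k) := fun k =>
    calc _ ≤ ENNReal.ofReal (4 / δ k) * μ (E k) :=
          measure_setOf_exists_lt_volume_orbit_le hjm hgrp hpres (hE k) (hδ k)
      _ ≤ ENNReal.ofReal (4 / δ k) * ENNReal.ofReal (δ k ^ 2) := by gcongr; exact hEμ k
      _ = ENNReal.ofReal (4 * δ k) := by
          rw [← ENNReal.ofReal_mul (div_pos four_pos (hδ k)).le]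
          congr 1
          field_simp [(hδ k).ne']
  have hfin : ∑' k, μ {m | ∃ n : ℕ, ENNReal.ofReal (2 * n * δ k) <
      volume ((τ · m) ⁻¹' E k ∩ closedBall 0 n)} ≠ ∞ := by
    refine ne_top_of_le_ne_top ?_ (ENNReal.tsum_le_tsum hbad)
    rw [← ENNReal.ofReal_tsum_of_nonneg (fun k => by linarith [hδ k]) (hsum.mul_left 4)]
    exact ENNReal.ofReal_ne_top
  filter_upwards [ae_eventually_notMem hfin] with m hm
  filter_upwards [hm] with k hk n
  simp only [not_exists, not_lt] at hk
  exact hk n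

end Flow

lemma measurable_intervalIntegral_of_measurable_uncurry {M : Type*} [MeasurableSpace M]
    {F : ℝ → M → ℝ} (hF : Measurable fun p : ℝ × M => F p.1 p.2) (a b : ℝ) :
    Measurable fun m => ∫ y in a..b, F y m := by
  have hsm := (hF.comp measurable_swap).stronglyMeasurable
  exact ((hsm.integral_prod_right' (ν := volume.restrict (Ioc a b))).sub
    (hsm.integral_prod_right' (ν := volume.restrict (Ioc b a)))).measurable

lemma tendsto_integral_div_of_tendsto_zero {g : ℝ → ℝ}
    (hg : ∀ a b, IntervalIntegrable g volume a b) (hlim : Tendsto g atTop (𝓝 0)) :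
    Tendsto (fun n : ℕ => (∫ y in (0 : ℝ)..n, g y) / n) atTop (𝓝 0) := by
  have hunit : Tendsto (fun k : ℕ => ∫ y in (k : ℝ)..(k + 1 : ℕ), g y) atTop (𝓝 0) := by
    refine Metric.tendsto_atTop.2 fun η hη => ?_
    obtain ⟨Y, hY⟩ := Metric.tendsto_atTop.1 hlim (η / 2) (by positivity)
    refine ⟨⌈Y⌉₊, fun k hk => ?_⟩
    have hYk : Y ≤ k := (Nat.le_ceil Y).trans (by exact_mod_cast hk)
    have hbound := intervalIntegral.norm_integral_le_of_norm_le_const (a := (k : ℝ))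
      (b := (k + 1 : ℕ)) (C := η / 2) (f := g) fun y hy => by
        rw [uIoc_of_le (by simp)] at hy
        simpa using (hY y (by linarith [hy.1])).le
    rw [dist_zero_right]
    calc _ ≤ η / 2 * |((k + 1 : ℕ) : ℝ) - k| := hbound
      _ < η := by
        push_cast
        rw [add_sub_cancel_left, abs_one, mul_one]
        linarith
  convert hunit.cesaro using 2 with n
  rw [div_eq_inv_mul, intervalIntegral.sum_integral_adjacent_intervals fun k _ => hg _ _]
  simp

lemma exists_measurableSet_forall_le_mul_of_ae_tendsto {M : Type*} [MeasurableSpace M]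
    {μ : Measure M} [IsFiniteMeasure μ] {a : ℕ → M → ℝ} (ha : ∀ n, Measurable (a n))
    (hlim : ∀ᵐ m ∂μ, Tendsto (fun n => a n m / n) atTop (𝓝 0)) {δ η : ℝ} (hδ : 0 < δ)
    (hη : 0 < η) :
    ∃ E : Set M, ∃ N : ℕ, MeasurableSet E ∧ μ E ≤ ENNReal.ofReal η ∧
      ∀ n ≥ N, ∀ m ∉ E, a n m ≤ δ * n := by
  obtain ⟨E, hEm, hEμ, hunif⟩ := tendstoUniformlyOn_of_ae_tendsto'
    (fun n => ((ha n).div_const _).stronglyMeasurable) stronglyMeasurable_const hlim hη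
  obtain ⟨N, hN⟩ := (Metric.tendstoUniformlyOn_iff.1 hunif δ hδ).exists_forall_of_atTop
  refine ⟨E, max N 1, hEm, hEμ, fun n hn m hm => ?_⟩
  have hn0 : (0 : ℝ) < n := by exact_mod_cast (le_of_max_le_right hn)
  have := hN n (le_of_max_le_left hn) m hm
  rw [dist_zero_left, Real.norm_eq_abs] at this
  exact (div_le_iff₀ hn0).1 (le_abs_self _ |>.trans this.le)

lemma integral_le_of_forall_nat_ge {g : ℝ → ℝ} (hg0 : ∀ y, 0 ≤ g y)
    (hg : ∀ b, IntervalIntegrable g volume 0 b) {δ : ℝ} (hδ : 0 ≤ δ) {N : ℕ}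
    (hN : ∀ n ≥ N, ∫ y in (0 : ℝ)..n, g y ≤ δ * n) {T : ℝ} (hNT : N ≤ T) (hT : 1 ≤ T) :
    ∫ y in (0 : ℝ)..T, g y ≤ 2 * δ * T := by
  have hNn : N ≤ ⌈T⌉₊ := Nat.cast_le.1 (hNT.trans (Nat.le_ceil T))
  calc ∫ y in (0 : ℝ)..T, g y ≤ ∫ y in (0 : ℝ)..⌈T⌉₊, g y :=
        intervalIntegral.integral_mono_interval le_rfl (by linarith) (Nat.le_ceil T)
          (ae_of_all _ fun y => hg0 y) (hg _)
    _ ≤ δ * ⌈T⌉₊ := hN _ hNn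
    _ ≤ 2 * δ * T := by nlinarith [Nat.ceil_lt_add_one (by linarith : (0 : ℝ) ≤ T)]

lemma integral_le_of_le_add_indicator {u : ℝ → ℝ} {W : Set ℝ} (hW : MeasurableSet W)
    {a A δ L : ℝ} (hu0 : ∀ y, 0 ≤ u y) (hu : ∀ y, u y ≤ a + W.indicator (fun _ => A) y)
    (hA : 0 ≤ A) (hδ : 0 ≤ δ) (hL : 1 ≤ L)
    (hdens : ∀ n : ℕ, volume (W ∩ closedBall 0 n) ≤ ENNReal.ofReal (2 * n * δ)) :
    ∫ y in -L..L, u y ≤ 2 * L * a + 4 * L * δ * A := by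
  have hWL : volume.real (W ∩ Ioc (-L) L) ≤ 4 * L * δ := by
    refine ENNReal.toReal_le_of_le_ofReal (by positivity) ?_
    calc volume (W ∩ Ioc (-L) L) ≤ volume (W ∩ closedBall 0 ⌈L⌉₊) := by
          refine measure_mono (inter_subset_inter_right W fun y hy => ?_)
          rw [Real.closedBall_eq_Icc]
          exact ⟨by linarith [hy.1, Nat.le_ceil L], by linarith [hy.2, Nat.le_ceil L]⟩
      _ ≤ ENNReal.ofReal (2 * ⌈L⌉₊ * δ) := hdens _
      _ ≤ ENNReal.ofReal (4 * L * δ) := ENNReal.ofReal_le_ofReal <| by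
          nlinarith [Nat.ceil_lt_add_one (by linarith : (0 : ℝ) ≤ L)]
  have hconst : IntegrableOn (fun _ => a) (Ioc (-L) L) := integrableOn_const measure_Ioc_lt_top.ne
  have hind : IntegrableOn (W.indicator fun _ => A) (Ioc (-L) L) :=
    (integrableOn_const measure_Ioc_lt_top.ne).indicator hW
  rw [intervalIntegral.integral_of_le (by linarith)]
  calc ∫ y in Ioc (-L) L, u y ≤ ∫ y in Ioc (-L) L, (a + W.indicator (fun _ => A) y) :=
        integral_mono_of_nonneg (ae_of_all _ hu0) (hconst.add hind) (ae_of_all _ hu)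
    _ = 2 * L * a + volume.real (W ∩ Ioc (-L) L) * A := by
        rw [integral_add hconst hind,
          integral_indicator_const _ hW, setIntegral_const, measureReal_restrict_apply hW,
          Real.volume_real_Ioc_of_le (by linarith)]
        simp only [smul_eq_mul]
        ring
    _ ≤ 2 * L * a + 4 * L * δ * A := by gcongr

lemma scaled_integral_le {M : Type*} {G : ℝ → M → ℝ} {B δ : ℝ} (hG0 : ∀ y m, 0 ≤ G y m)
    (hGB : ∀ y m, G y m ≤ B) (hGi : ∀ m b, IntervalIntegrable (G · m) volume 0 b) (hδ : 0 ≤ δ)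
    {E : Set M} {N : ℕ} (hN : ∀ n ≥ N, ∀ m ∉ E, ∫ y in (0 : ℝ)..n, G y m ≤ δ * n)
    {x : ℝ → M} (hxE : MeasurableSet (x ⁻¹' E))
    (hdens : ∀ n : ℕ, volume (x ⁻¹' E ∩ closedBall 0 n) ≤ ENNReal.ofReal (2 * n * δ))
    {ε R : ℝ} (hε : 0 < ε) (hε1 : ε ≤ 1) (hNε : N ≤ 1 / ε) (hR : 1 ≤ R) :
    ε ^ 2 / R * ∫ y₁ in -(R / ε)..R / ε, ∫ y₂ in (0 : ℝ)..1 / ε, G y₂ (x y₁)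
      ≤ (4 + 4 * B) * δ := by
  have hT : 1 ≤ 1 / ε := one_le_one_div hε hε1
  have hL : 1 ≤ R / ε := by rw [le_div_iff₀ hε]; linarith
  have hB : 0 ≤ B := (hG0 0 (x 0)).trans (hGB 0 (x 0))
  have hinner : ∀ y₁, ∫ y₂ in (0 : ℝ)..1 / ε, G y₂ (x y₁) ≤
      2 * δ * (1 / ε) + (x ⁻¹' E).indicator (fun _ => B * (1 / ε)) y₁ := by
    intro y₁
    by_cases hy₁ : y₁ ∈ x ⁻¹' E
    · have hbound : ∫ y₂ in (0 : ℝ)..1 / ε, G y₂ (x y₁) ≤ B * (1 / ε) :=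
        calc ∫ y₂ in (0 : ℝ)..1 / ε, G y₂ (x y₁) ≤ ∫ _ in (0 : ℝ)..1 / ε, B :=
              intervalIntegral.integral_mono_on (by linarith) (hGi _ _) intervalIntegrable_const
                fun y _ => hGB y _
          _ = B * (1 / ε) := by simp [mul_comm]
      rw [indicator_of_mem hy₁]
      nlinarith
    · rw [indicator_of_notMem hy₁, add_zero]
      exact integral_le_of_forall_nat_ge (hG0 · _) (hGi _) hδ (fun n hn => hN n hn _ hy₁) hNε hT
  calc ε ^ 2 / R * ∫ y₁ in -(R / ε)..R / ε, ∫ y₂ in (0 : ℝ)..1 / ε, G y₂ (x y₁)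
      ≤ ε ^ 2 / R * (2 * (R / ε) * (2 * δ * (1 / ε)) + 4 * (R / ε) * δ * (B * (1 / ε))) := by
        gcongr
        exact integral_le_of_le_add_indicator hxE (fun y₁ => intervalIntegral.integral_nonneg
          (by linarith) fun y _ => hG0 y _) hinner (by positivity) hδ hL hdens
    _ = (4 + 4 * B) * δ := by field_simp; ring

lemma tendsto_iSup_scaled_integral {M : Type*} {G : ℝ → M → ℝ} {B : ℝ}
    (hG0 : ∀ y m, 0 ≤ G y m) (hGB : ∀ y m, G y m ≤ B)
    (hGi : ∀ m b, IntervalIntegrable (G · m) volume 0 b) {δ : ℕ → ℝ} (hδ0 : ∀ k, 0 ≤ δ k)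
    (hδ : Tendsto δ atTop (𝓝 0)) {E : ℕ → Set M} {N : ℕ → ℕ}
    (hN : ∀ k, ∀ n ≥ N k, ∀ m ∉ E k, ∫ y in (0 : ℝ)..n, G y m ≤ δ k * n)
    {x : ℝ → M} (hxE : ∀ k, MeasurableSet (x ⁻¹' E k))
    (hdens : ∀ᶠ k in atTop, ∀ n : ℕ,
      volume (x ⁻¹' E k ∩ closedBall 0 n) ≤ ENNReal.ofReal (2 * n * δ k)) :
    Tendsto (fun ε : ℝ => ⨆ R : Ici (1 : ℝ),
        ε ^ 2 / R * ∫ y₁ in -(R / ε)..R / ε, ∫ y₂ in (0 : ℝ)..1 / ε, G y₂ (x y₁))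
      (𝓝[>] 0) (𝓝 0) := by
  have hB : 0 ≤ B := (hG0 0 (x 0)).trans (hGB 0 (x 0))
  refine tendsto_order.2 ⟨fun a ha => ?_, fun b hb => ?_⟩
  · filter_upwards [self_mem_nhdsWithin] with ε (hε : 0 < ε)
    refine ha.trans_le (Real.iSup_nonneg fun R => ?_)
    have hR : 0 ≤ (R : ℝ) := zero_le_one.trans R.2
    refine mul_nonneg (by positivity) ?_
    have hRε : 0 ≤ (R : ℝ) / ε := by positivity
    exact intervalIntegral.integral_nonneg (by linarith) fun y₁ _ =>
      intervalIntegral.integral_nonneg (by positivity) fun y₂ _ => hG0 y₂ _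
  · obtain ⟨k, hkb, hk⟩ := (((hδ.const_mul (4 + 4 * B)).eventually
      (gt_mem_nhds (by simpa using hb))).and hdens).exists
    filter_upwards [Ioo_mem_nhdsGT (by positivity : (0 : ℝ) < 1 / (N k + 1))]
      with ε ⟨hε, hεN⟩
    have hNε : (N k : ℝ) + 1 ≤ 1 / ε := (le_div_iff₀ hε).2 <| by
      rw [lt_div_iff₀ (by positivity)] at hεN; linarith
    have hε1 : ε ≤ 1 := (one_le_div hε).1 <| by
      linarith [(by positivity : (0 : ℝ) ≤ N k)]
    refine lt_of_le_of_lt (Real.iSup_le (fun R => ?_) (mul_nonneg (by positivity) (hδ0 k))) hkb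
    exact scaled_integral_le hG0 hGB hGi (hδ0 k) (hN k) (hxE k) hk hε hε1 (by linarith) R.2

theorem stmt16_general {M : Type*} [MeasurableSpace M] (μ : Measure M) [IsProbabilityMeasure μ]
    (τ : ℝ → M → M)
    (hjm : Measurable fun p : ℝ × M => τ p.1 p.2)
    (hgrp : ∀ s t : ℝ, ∀ m, τ (s + t) m = τ s (τ t m))
    (hpres : ∀ t : ℝ, MeasurePreserving (τ t) μ μ)
    (f : ℝ → M → ℝ)
    (hfm : Measurable fun p : ℝ × M => f p.1 p.2)
    (hfb : ∃ C : ℝ, ∀ y₂ : ℝ, ∀ m, |f y₂ m| ≤ C)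
    (hlim : ∀ᵐ m ∂μ, Tendsto (fun y₂ : ℝ => f y₂ m) atTop (nhds 0)) :
    ∀ᵐ m ∂μ,
      Tendsto
        (fun ε : ℝ => ⨆ R : Set.Ici (1 : ℝ),
          (ε ^ 2 / (R : ℝ)) *
            ∫ y₁ in (-((R : ℝ) / ε))..((R : ℝ) / ε),
              ∫ y₂ in (0 : ℝ)..(1 / ε), (f y₂ (τ y₁ m)) ^ 2)
        (nhdsWithin 0 (Set.Ioi 0)) (nhds 0) := by
  obtain ⟨C, hC⟩ := hfb
  have hsq_nonneg : ∀ y m, 0 ≤ f y m ^ 2 := fun _ _ => sq_nonneg _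
  have hsq_le : ∀ y m, f y m ^ 2 ≤ C ^ 2 := fun y m =>
    sq_le_sq' (abs_le.1 (hC y m)).1 (abs_le.1 (hC y m)).2
  have hsq_int : ∀ m a b, IntervalIntegrable (f · m ^ 2) volume a b := fun m a b =>
    intervalIntegrable_const.mono_fun' (hfm.of_uncurry_right.pow_const 2).aestronglyMeasurable
      (ae_of_all _ fun y => by simpa using hsq_le y m)
  have hces : ∀ᵐ m ∂μ, Tendsto (fun n : ℕ => (∫ y in (0 : ℝ)..n, f y m ^ 2) / n) atTop (nhds 0) :=
    hlim.mono fun m hm =>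
      tendsto_integral_div_of_tendsto_zero (hsq_int m) (by simpa using hm.pow 2)
  choose E N hEm hEμ hEN using fun k : ℕ =>
    exists_measurableSet_forall_le_mul_of_ae_tendsto (δ := (1 / 2) ^ k) (η := ((1 / 2) ^ k) ^ 2)
      (fun n => measurable_intervalIntegral_of_measurable_uncurry (F := (f · · ^ 2))
        (hfm.pow_const 2) 0 n) hces (by positivity) (by positivity)
  filter_upwards [ae_eventually_forall_volume_orbit_le hjm hgrp hpres hEm (fun k => by positivity)
    summable_geometric_two hEμ] with m hm
  exact tendsto_iSup_scaled_integral hsq_nonneg hsq_le (fun m => hsq_int m 0)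
    (fun k => by positivity) (tendsto_pow_atTop_nhds_zero_of_lt_one (by norm_num) (by norm_num)) hEN
    (fun k => hjm.of_uncurry_right (hEm k)) hm

/-- For a jointly measurable, measure-preserving, ergodic flow `(τ_t)` on a probability
space and a bounded measurable `f : [0,∞) × M → ℝ` such that `f(y₂,m) → 0` as
`y₂ → ∞` for a.e. `m`, one has, for a.e. `m`,
`lim_{ε→0⁺} sup_{R≥1} (ε²/R) ∫_{−R/ε}^{R/ε} ∫_0^{1/ε} f(y₂, τ_{y₁} m)² dy₂ dy₁ = 0`. -/
theorem stmt16 {M : Type*} [MeasurableSpace M] (μ : Measure M) [IsProbabilityMeasure μ]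
    (τ : ℝ → M → M)
    (hjm : Measurable fun p : ℝ × M => τ p.1 p.2)
    (hid : ∀ m, τ 0 m = m)
    (hgrp : ∀ s t : ℝ, ∀ m, τ (s + t) m = τ s (τ t m))
    (hpres : ∀ t : ℝ, MeasurePreserving (τ t) μ μ)
    (herg : ∀ A : Set M, MeasurableSet A → (∀ t : ℝ, μ ((τ t ⁻¹' A) ∆ A) = 0) →
      μ A = 0 ∨ μ A = 1)
    (f : ℝ → M → ℝ)
    (hfm : Measurable fun p : ℝ × M => f p.1 p.2)
    (hfb : ∃ C : ℝ, ∀ y₂ : ℝ, ∀ m, |f y₂ m| ≤ C)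
    (hlim : ∀ᵐ m ∂μ, Tendsto (fun y₂ : ℝ => f y₂ m) atTop (nhds 0)) :
    ∀ᵐ m ∂μ,
      Tendsto
        (fun ε : ℝ => ⨆ R : Set.Ici (1 : ℝ),
          (ε ^ 2 / (R : ℝ)) *
            ∫ y₁ in (-((R : ℝ) / ε))..((R : ℝ) / ε),
              ∫ y₂ in (0 : ℝ)..(1 / ε), (f y₂ (τ y₁ m)) ^ 2)
        (nhdsWithin 0 (Set.Ioi 0)) (nhds 0) :=
  stmt16_general μ τ hjm hgrp hpres f hfm hfb hlim
end
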